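/- Fix an integer t ≥ 1, a finite set V, and a function u : {1,…,t} → V. Let G_0, G_1, …, G_t be weighted directed graphs, each on a subset of V with positive edge weights, such that for every i ∈ {1,…,t} the induced weighted subgraphs of G_{i−1} and of G_i on V ∖ {u(i)} coincide. Say that a vertex x is updated at step t' ∈ {1,…,t} if x = u(s) for some s ∈ D(t') with s ≥ 1. Let p be a path of G_t each of whose vertices is updated at some step in {1,…,t}, and let t_p be the largest step in {1,…,t} at which some vertex of p is updated. If p is a shortest path in G_{t''} for some t'' with t_p ≤ t'' ≤ t, then t_p ∈ Prior-times(t), and p is a shortest path in the induced weighted subgraph of G_{t_p} on the vertices of G_{t_p} other than u(t_p+1), …, u(t). -/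

import Mathlib

/-!
The intervals `D t` form a laminar family, and removing the top block `D t` from `(0, t]` leaves
`(0, t - 2 ^ setBit t]`, whose prior times are prior times of `t`. By induction on `t`, the latest
step `τ ≤ t` with `s ∈ D τ` is therefore a prior time of `t`. For a step `s ∈ D t_p` with
`u s ∈ p`, maximality of `t_p` makes `t_p` exactly this latest step. Maximality also shows that no
`u s` with `t_p < s ≤ t` lies on `p` (as `s ∈ D s`), so the subgraphs induced on the complement of
`{u (t_p + 1), …, u t}` agree from `G t_p` up to `G t''`, and the shortest path `p` of `G t''`
lying inside this set is a shortest path in each of them.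
-/

namespace Apasp

/-- A weighted directed graph on a subset of the vertex type `V`. -/
structure WDigraph (V : Type*) where
  verts : Finset V
  edges : Finset (V × V)
  edges_sub : edges ⊆ verts ×ˢ verts
  w : V × V → ℝ
  w_pos : ∀ e ∈ edges, 0 < w e

namespace WDigraph

variable {V : Type*}

/-- The list of consecutive vertex pairs (edges) of a vertex list. -/
def pathEdges (p : List V) : List (V × V) := p.zip p.tail

/-- `p` is a path of `G` (a nonempty vertex list whose vertices are in `G`
and whose consecutive pairs are edges of `G`). -/
def IsPath (G : WDigraph V) (p : List V) : Prop :=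
  p ≠ [] ∧ (∀ v ∈ p, v ∈ G.verts) ∧ ∀ e ∈ pathEdges p, e ∈ G.edges

/-- The weight of a path: the sum of the weights of its edges. -/
def weight (G : WDigraph V) (p : List V) : ℝ :=
  ((pathEdges p).map G.w).sum

/-- `p` is a path of `G` from `x` to `y`. -/
def IsPathFT (G : WDigraph V) (p : List V) (x y : V) : Prop :=
  G.IsPath p ∧ p.head? = some x ∧ p.getLast? = some y

/-- `p` is a shortest path of `G` from `x` to `y`. -/
def IsSPFT (G : WDigraph V) (p : List V) (x y : V) : Prop :=
  G.IsPathFT p x y ∧ ∀ q, G.IsPathFT q x y → G.weight p ≤ G.weight q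

/-- `p` is a shortest path of `G` (between its endpoints). -/
def IsSP (G : WDigraph V) (p : List V) : Prop :=
  ∃ x y, G.IsSPFT p x y

/-- The shortest-path distance from `x` to `y` in `G`. -/
noncomputable def dist (G : WDigraph V) (x y : V) : ℝ :=
  sInf {r | ∃ p, G.IsPathFT p x y ∧ G.weight p = r}

/-- `p` is a locally shortest path from `x` to `y`: removing the first edge,
resp. the last edge, yields a shortest path. -/
def IsLSP (G : WDigraph V) (p : List V) (x y : V) : Prop :=
  G.IsPathFT p x y ∧ G.IsSP p.tail ∧ G.IsSP p.dropLast

/-- The first edge of the list `p` is `(x, a)`. -/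
def FirstEdge (p : List V) (x a : V) : Prop := ∃ q, p = x :: a :: q

/-- The last edge of the list `p` is `(b, y)`. -/
def LastEdge (p : List V) (b y : V) : Prop := ∃ r, p = r ++ [b, y]

/-- `((x,a),(b,y),wt)` is a locally shortest tuple of `G`. -/
def IsLST (G : WDigraph V) (x a b y : V) (wt : ℝ) : Prop :=
  ∃ p, G.IsLSP p x y ∧ FirstEdge p x a ∧ LastEdge p b y ∧ G.weight p = wt

/-- `((x,a),(b,y),wt)` is a locally shortest tuple of `G`, witnessed by a
locally shortest path containing the vertex `v`. -/
def IsLSTThru (G : WDigraph V) (v x a b y : V) (wt : ℝ) : Prop :=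
  ∃ p, G.IsLSP p x y ∧ FirstEdge p x a ∧ LastEdge p b y ∧ G.weight p = wt ∧ v ∈ p

/-- The set of edges of `G` that lie on shortest paths through the vertex `v`. -/
def spEdgesThru (G : WDigraph V) (v : V) : Set (V × V) :=
  {e | ∃ p, G.IsSP p ∧ v ∈ p ∧ e ∈ pathEdges p}

/-- `ν*(G)`: the maximum over vertices `v` of the number of distinct edges
lying on shortest paths through `v`. -/
noncomputable def nuStar (G : WDigraph V) : ℕ :=
  G.verts.sup fun v => (G.spEdgesThru v).ncard

/-- `m*(G)`: the number of edges of `G` lying on at least one shortest path. -/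
noncomputable def mStar (G : WDigraph V) : ℕ :=
  {e | ∃ p, G.IsSP p ∧ e ∈ pathEdges p}.ncard

/-- The induced weighted subgraph of `G` on the vertex set `S`. -/
def induce [DecidableEq V] (G : WDigraph V) (S : Finset V) : WDigraph V where
  verts := G.verts ∩ S
  edges := G.edges.filter fun e => e.1 ∈ S ∧ e.2 ∈ S
  edges_sub := by
    intro e he
    rw [Finset.mem_filter] at he
    have h := G.edges_sub he.1
    rw [Finset.mem_product] at h ⊢
    exact ⟨Finset.mem_inter.mpr ⟨h.1, he.2.1⟩, Finset.mem_inter.mpr ⟨h.2, he.2.2⟩⟩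
  w := G.w
  w_pos := fun e he => G.w_pos e (Finset.mem_filter.mp he).1

/-- Two weighted digraphs coincide: same vertices, same edges, and the same
weights on the edges. -/
def Coincide (G H : WDigraph V) : Prop :=
  G.verts = H.verts ∧ G.edges = H.edges ∧ ∀ e ∈ G.edges, G.w e = H.w e

end WDigraph

/-- `setBit t`: the position of the least significant 1 in the binary
representation of `t`, i.e. the largest `k` with `2^k ∣ t` (for `t ≥ 1`). -/
def setBit (t : ℕ) : ℕ := Nat.findGreatest (fun k => 2 ^ k ∣ t) t

/-- `D t = {t - 2^(setBit t) + 1, …, t}`. -/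
def D (t : ℕ) : Finset ℕ := Finset.Icc (t - 2 ^ setBit t + 1) t

/-- `priorTimes t`: the set of numbers obtained from `t` by choosing a bit
position `i` at which `t` has a 1 and zeroing all bits below position `i`. -/
def priorTimes (t : ℕ) : Finset ℕ :=
  ((Finset.range (t + 1)).filter fun i => t.testBit i).image fun i => 2 ^ i * (t / 2 ^ i)


namespace WDigraph

variable {V : Type*}

lemma mem_of_mem_pathEdges {p : List V} {e : V × V} (h : e ∈ pathEdges p) :
    e.1 ∈ p ∧ e.2 ∈ p := by
  obtain ⟨h1, h2⟩ := List.of_mem_zip h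
  exact ⟨h1, List.mem_of_mem_tail h2⟩

namespace Coincide

variable {G H K : WDigraph V}

protected lemma refl (G : WDigraph V) : Coincide G G :=
  ⟨rfl, rfl, fun _ _ => rfl⟩

protected lemma symm (h : Coincide G H) : Coincide H G :=
  ⟨h.1.symm, h.2.1.symm, fun e he => (h.2.2 e (h.2.1 ▸ he)).symm⟩

protected lemma trans (h₁ : Coincide G H) (h₂ : Coincide H K) : Coincide G K :=
  ⟨h₁.1.trans h₂.1, h₁.2.1.trans h₂.2.1,
    fun e he => (h₁.2.2 e he).trans (h₂.2.2 e (h₁.2.1 ▸ he))⟩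

lemma weight_eq (h : Coincide G H) {p : List V} (hp : ∀ e ∈ pathEdges p, e ∈ G.edges) :
    G.weight p = H.weight p :=
  congrArg List.sum (List.map_congr_left fun e he => h.2.2 e (hp e he))

lemma isPathFT (h : Coincide G H) {p : List V} {x y : V} (hp : G.IsPathFT p x y) :
    H.IsPathFT p x y :=
  ⟨⟨hp.1.1, fun v hv => h.1 ▸ hp.1.2.1 v hv, fun e he => h.2.1 ▸ hp.1.2.2 e he⟩, hp.2⟩

lemma isSP (h : Coincide G H) {p : List V} (hp : G.IsSP p) : H.IsSP p := by
  obtain ⟨x, y, hpxy, hmin⟩ := hp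
  refine ⟨x, y, h.isPathFT hpxy, fun q hq => ?_⟩
  have hqG : G.IsPathFT q x y := h.symm.isPathFT hq
  calc H.weight p = G.weight p := (h.weight_eq hpxy.1.2.2).symm
    _ ≤ G.weight q := hmin q hqG
    _ = H.weight q := h.weight_eq hqG.1.2.2

end Coincide

variable [DecidableEq V] {G H : WDigraph V} {S A : Finset V}

lemma Coincide.induce (h : Coincide G H) (S : Finset V) :
    Coincide (G.induce S) (H.induce S) := by
  refine ⟨?_, ?_, fun e he => h.2.2 e (Finset.mem_filter.mp he).1⟩
  · exact congrArg (· ∩ S) h.1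
  · exact congrArg (Finset.filter _) h.2.1

lemma coincide_induce_induce (G : WDigraph V) (hS : S ⊆ A) :
    Coincide ((G.induce A).induce S) (G.induce S) := by
  refine ⟨?_, ?_, fun _ _ => rfl⟩
  · exact (Finset.inter_assoc _ _ _).trans (congrArg _ (Finset.inter_eq_right.mpr hS))
  · refine (Finset.filter_filter _ _ _).trans (Finset.filter_congr fun e _ => ?_)
    exact ⟨fun h => h.2, fun h => ⟨⟨hS h.1, hS h.2⟩, h⟩⟩

lemma Coincide.induce_of_subset (h : Coincide (G.induce A) (H.induce A)) (hS : S ⊆ A) :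
    Coincide (G.induce S) (H.induce S) :=
  ((coincide_induce_induce G hS).symm.trans (h.induce S)).trans (coincide_induce_induce H hS)

lemma coincide_induce_of_inter_eq {S' : Finset V} (h : G.verts ∩ S = G.verts ∩ S') :
    Coincide (G.induce S) (G.induce S') := by
  have hmem : ∀ v ∈ G.verts, v ∈ S ↔ v ∈ S' := fun v hv => by
    simpa [hv] using Finset.ext_iff.mp h v
  refine ⟨h, Finset.filter_congr fun e he => ?_, fun _ _ => rfl⟩
  have he' := Finset.mem_product.mp (G.edges_sub he)
  rw [hmem _ he'.1, hmem _ he'.2]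

lemma IsPathFT.of_induce {p : List V} {x y : V} (hp : (G.induce S).IsPathFT p x y) :
    G.IsPathFT p x y :=
  ⟨⟨hp.1.1, fun v hv => (Finset.mem_inter.mp (hp.1.2.1 v hv)).1,
    fun e he => (Finset.mem_filter.mp (hp.1.2.2 e he)).1⟩, hp.2⟩

lemma IsPathFT.induce {p : List V} {x y : V} (hp : G.IsPathFT p x y) (hS : ∀ v ∈ p, v ∈ S) :
    (G.induce S).IsPathFT p x y := by
  refine ⟨⟨hp.1.1, fun v hv => Finset.mem_inter.mpr ⟨hp.1.2.1 v hv, hS v hv⟩,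
    fun e he => Finset.mem_filter.mpr ⟨hp.1.2.2 e he, ?_⟩⟩, hp.2⟩
  exact ⟨hS _ (mem_of_mem_pathEdges he).1, hS _ (mem_of_mem_pathEdges he).2⟩

lemma IsSP.induce {p : List V} (hp : G.IsSP p) (hS : ∀ v ∈ p, v ∈ S) :
    (G.induce S).IsSP p := by
  obtain ⟨x, y, hpxy, hmin⟩ := hp
  exact ⟨x, y, hpxy.induce hS, fun q hq => hmin q hq.of_induce⟩

lemma coincide_induce_of_le {G : ℕ → WDigraph V} {a b : ℕ} (hab : a ≤ b)
    (h : ∀ i, a ≤ i → i < b → Coincide ((G i).induce S) ((G (i + 1)).induce S)) :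
    Coincide ((G a).induce S) ((G b).induce S) := by
  induction b, hab using Nat.le_induction with
  | base => exact Coincide.refl _
  | succ b hab ih =>
    exact (ih fun i hi hib => h i hi (by omega)).trans (h b hab (by omega))

lemma IsSP.induce_sdiff_of_coincide [Fintype V] {G : ℕ → WDigraph V} {T : Finset V}
    {p : List V} {a b : ℕ} (hab : a ≤ b)
    (hG : ∀ i, a ≤ i → i < b →
      Coincide ((G i).induce (Finset.univ \ T)) ((G (i + 1)).induce (Finset.univ \ T)))
    (hp : (G b).IsSP p) (hpT : ∀ x ∈ p, x ∉ T) :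
    ((G a).induce ((G a).verts \ T)).IsSP p := by
  have hverts : (G a).verts ∩ ((G a).verts \ T) = (G a).verts ∩ (Finset.univ \ T) := by
    ext v; simp
  have hp' := hp.induce fun x hx => Finset.mem_sdiff.mpr ⟨Finset.mem_univ x, hpT x hx⟩
  exact (coincide_induce_of_inter_eq hverts).symm.isSP ((coincide_induce_of_le hab hG).symm.isSP hp')

end WDigraph

lemma setBit_dvd (t : ℕ) : 2 ^ setBit t ∣ t :=
  Nat.findGreatest_spec (P := fun k => 2 ^ k ∣ t) (Nat.zero_le t) (by simp)

lemma not_two_pow_setBit_succ_dvd {t : ℕ} (ht : 1 ≤ t) : ¬ 2 ^ (setBit t + 1) ∣ t := by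
  have : setBit t < t := Nat.lt_two_pow_self.trans_le (Nat.le_of_dvd ht (setBit_dvd t))
  exact Nat.findGreatest_is_greatest (P := fun k => 2 ^ k ∣ t) (Nat.lt_succ_self _) (by omega)

lemma eq_two_pow_setBit_mul_odd {t : ℕ} (ht : 1 ≤ t) :
    ∃ m, t = 2 ^ setBit t * (2 * m + 1) := by
  obtain ⟨n, hn⟩ := setBit_dvd t
  obtain ⟨m, rfl | rfl⟩ := Nat.even_or_odd' n
  · exact absurd ⟨m, by rw [pow_succ, mul_assoc]; exact hn⟩ (not_two_pow_setBit_succ_dvd ht)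
  · exact ⟨m, hn⟩

lemma mem_D_iff {t s : ℕ} : s ∈ D t ↔ t - 2 ^ setBit t + 1 ≤ s ∧ s ≤ t := by
  simp [D]

lemma self_mem_D {s : ℕ} (hs : 1 ≤ s) : s ∈ D s :=
  mem_D_iff.mpr ⟨by have := Nat.one_le_two_pow (n := setBit s); omega, le_rfl⟩

lemma D_subset_D_of_mem {t t' : ℕ} (h : t' ∈ D t) : D t' ⊆ D t := by
  intro s hs
  rw [mem_D_iff] at h hs ⊢
  obtain ⟨m, hm⟩ := eq_two_pow_setBit_mul_odd (t := t) (by omega)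
  have hb : 2 ^ (setBit t + 1) = 2 * 2 ^ setBit t := by rw [pow_succ, mul_comm]
  have hsub : t - 2 ^ setBit t = 2 ^ (setBit t + 1) * m := by
    rw [hb, mul_assoc, Nat.sub_eq_of_eq_add]; nth_rw 1 [hm]; ring
  -- `2 ^ setBit t'` divides both ends of the interval `(t - 2 ^ setBit t, t']`.
  have hdvd : 2 ^ setBit t' ∣ t - 2 ^ setBit t := by
    by_cases hb' : setBit t' ≤ setBit t + 1
    · exact hsub ▸ (pow_dvd_pow 2 hb').mul_right m
    · have h₁ : 2 ^ (setBit t + 1) ∣ t' - (t - 2 ^ setBit t) :=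
        Nat.dvd_sub ((pow_dvd_pow 2 (by omega)).trans (setBit_dvd t')) (hsub ▸ dvd_mul_right _ _)
      have := Nat.le_of_dvd (by omega) h₁
      omega
  have := Nat.le_of_dvd (by omega) (Nat.dvd_sub (setBit_dvd t') hdvd)
  omega

lemma mem_priorTimes_iff {t τ : ℕ} :
    τ ∈ priorTimes t ↔ ∃ i, t.testBit i ∧ 2 ^ i * (t / 2 ^ i) = τ := by
  simp only [priorTimes, Finset.mem_image, Finset.mem_filter, Finset.mem_range, and_assoc]
  refine ⟨fun ⟨i, _, hi⟩ => ⟨i, hi⟩, fun ⟨i, hi, hτ⟩ => ⟨i, ?_, hi, hτ⟩⟩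
  have := Nat.ge_two_pow_of_testBit hi
  have : i < 2 ^ i := Nat.lt_two_pow_self
  omega

lemma self_mem_priorTimes {t : ℕ} (ht : 1 ≤ t) : t ∈ priorTimes t := by
  obtain ⟨m, hm⟩ := eq_two_pow_setBit_mul_odd ht
  refine mem_priorTimes_iff.mpr ⟨setBit t, ?_, Nat.mul_div_cancel' (setBit_dvd t)⟩
  generalize setBit t = b at hm
  subst hm
  simp [Nat.testBit_two_pow_mul]

lemma priorTimes_sub_subset {t : ℕ} (ht : 1 ≤ t) :
    priorTimes (t - 2 ^ setBit t) ⊆ priorTimes t := by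
  intro τ hτ
  obtain ⟨m, hm⟩ := eq_two_pow_setBit_mul_odd ht
  rw [mem_priorTimes_iff] at hτ ⊢
  obtain ⟨i, hi, rfl⟩ := hτ
  generalize setBit t = b at hm hi ⊢
  subst hm
  have hsub : 2 ^ b * (2 * m + 1) - 2 ^ b = 2 ^ (b + 1) * m := by
    rw [Nat.sub_eq_of_eq_add]; ring
  rw [hsub] at hi ⊢
  have hbi : b + 1 ≤ i := by
    simp only [Nat.testBit_two_pow_mul, Bool.and_eq_true, decide_eq_true_eq] at hi
    exact hi.1
  have hdiv : 2 ^ b * (2 * m + 1) / 2 ^ i = 2 ^ (b + 1) * m / 2 ^ i := by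
    obtain ⟨j, rfl⟩ := Nat.exists_eq_add_of_le hbi
    rw [pow_add, ← Nat.div_div_eq_div_mul, ← Nat.div_div_eq_div_mul,
      Nat.mul_div_cancel_left _ (by positivity),
      show 2 ^ b * (2 * m + 1) = 2 ^ b + 2 ^ (b + 1) * m by ring,
      Nat.add_mul_div_left _ _ (by positivity),
      Nat.div_eq_of_lt (Nat.pow_lt_pow_succ one_lt_two), zero_add]
  exact ⟨i, by rwa [Nat.testBit_eq_decide_div_mod_eq, hdiv, ← Nat.testBit_eq_decide_div_mod_eq],
    by rw [hdiv]⟩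

theorem mem_priorTimes_of_isGreatest {t s τ : ℕ}
    (h : IsGreatest {t' | t' ≤ t ∧ s ∈ D t'} τ) : τ ∈ priorTimes t := by
  induction t using Nat.strong_induction_on generalizing τ with
  | _ t ih =>
  obtain ⟨⟨hτt, hsτ⟩, hmax⟩ := h
  have hs := mem_D_iff.mp hsτ
  have ht : 1 ≤ t := by omega
  by_cases hst : s ∈ D t
  · rw [le_antisymm hτt (hmax ⟨le_rfl, hst⟩)]
    exact self_mem_priorTimes ht
  · have hτ : τ ≤ t - 2 ^ setBit t := by
      by_contra hlt
      exact hst (D_subset_D_of_mem (mem_D_iff.mpr ⟨by omega, hτt⟩) hsτ)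
    have := Nat.one_le_two_pow (n := setBit t)
    exact priorTimes_sub_subset ht <| ih _ (by omega)
      ⟨⟨hτ, hsτ⟩, fun t' ht' => hmax ⟨ht'.1.trans (Nat.sub_le _ _), ht'.2⟩⟩

open WDigraph in
theorem stmt12_general {V : Type*} [Fintype V] [DecidableEq V] (t : ℕ)
    (u : ℕ → V) (G : ℕ → WDigraph V)
    (hcoin : ∀ i ∈ Finset.Icc 1 t,
      Coincide ((G (i - 1)).induce (Finset.univ \ {u i}))
        ((G i).induce (Finset.univ \ {u i})))
    (p : List V)
    (hne : ((Finset.Icc 1 t).filter fun t' =>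
      ∃ x ∈ p, ∃ s ∈ D t', 1 ≤ s ∧ u s = x).Nonempty)
    (tp : ℕ)
    (htp : tp = ((Finset.Icc 1 t).filter fun t' =>
      ∃ x ∈ p, ∃ s ∈ D t', 1 ≤ s ∧ u s = x).max' hne)
    (hsp : ∃ t'', tp ≤ t'' ∧ t'' ≤ t ∧ (G t'').IsSP p) :
    tp ∈ priorTimes t ∧
      ((G tp).induce ((G tp).verts \ (Finset.Icc (tp + 1) t).image u)).IsSP p := by
  set F := (Finset.Icc 1 t).filter fun t' => ∃ x ∈ p, ∃ s ∈ D t', 1 ≤ s ∧ u s = x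
  have hle_tp : ∀ t' ∈ F, t' ≤ tp := fun t' h => htp ▸ F.le_max' t' h
  have hmem_F : ∀ {t' s}, t' ≤ t → s ∈ D t' → u s ∈ p → t' ∈ F := fun ht' hs hup => by
    have := mem_D_iff.mp hs
    exact Finset.mem_filter.mpr ⟨Finset.mem_Icc.mpr ⟨by omega, ht'⟩, _, hup, _, hs, by omega, rfl⟩
  obtain ⟨htpt, -, ⟨s₀, hs₀, -, rfl⟩, hs₀p⟩ :
      tp ≤ t ∧ ∃ x, (∃ s ∈ D tp, 1 ≤ s ∧ u s = x) ∧ x ∈ p := by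
    have := Finset.mem_filter.mp (htp ▸ F.max'_mem hne)
    obtain ⟨x, hx, hxs⟩ := this.2
    exact ⟨(Finset.mem_Icc.mp this.1).2, x, hxs, hx⟩
  refine ⟨mem_priorTimes_of_isGreatest (s := s₀)
    ⟨⟨htpt, hs₀⟩, fun t' ht' => hle_tp t' (hmem_F ht'.1 ht'.2 hs₀p)⟩, ?_⟩
  obtain ⟨t'', htp'', ht'', hsp⟩ := hsp
  refine hsp.induce_sdiff_of_coincide htp'' (fun i hi hit => ?_) fun x hx hxT => ?_
  · have := hcoin (i + 1) (Finset.mem_Icc.mpr ⟨by omega, by omega⟩)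
    rw [Nat.add_sub_cancel] at this
    refine this.induce_of_subset (Finset.sdiff_subset_sdiff le_rfl ?_)
    exact Finset.singleton_subset_iff.mpr
      (Finset.mem_image_of_mem u (Finset.mem_Icc.mpr ⟨by omega, by omega⟩))
  · obtain ⟨s, hs, rfl⟩ := Finset.mem_image.mp hxT
    have := Finset.mem_Icc.mp hs
    have := hle_tp s (hmem_F this.2 (self_mem_D (by omega)) hx)
    omega

open WDigraph in
/-- If every vertex of the path `p` of `G t` has been updated by step `t`,
`t_p` is the last step at which a vertex of `p` is updated, and `p` is a
shortest path in some `G t''` with `t_p ≤ t'' ≤ t`, then `t_p ∈ priorTimes t`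
and `p` is a shortest path in the prior deletion graph obtained from `G t_p`
by removing the vertices `u (t_p+1), …, u t`. -/
theorem stmt12 {V : Type*} [Fintype V] [DecidableEq V] (t : ℕ) (ht : 1 ≤ t)
    (u : ℕ → V) (G : ℕ → WDigraph V)
    (hcoin : ∀ i ∈ Finset.Icc 1 t,
      Coincide ((G (i - 1)).induce (Finset.univ \ {u i}))
        ((G i).induce (Finset.univ \ {u i})))
    (p : List V) (hp : (G t).IsPath p)
    (hupd : ∀ x ∈ p, ∃ t' ∈ Finset.Icc 1 t, ∃ s ∈ D t', 1 ≤ s ∧ u s = x)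
    (hne : ((Finset.Icc 1 t).filter fun t' =>
      ∃ x ∈ p, ∃ s ∈ D t', 1 ≤ s ∧ u s = x).Nonempty)
    (tp : ℕ)
    (htp : tp = ((Finset.Icc 1 t).filter fun t' =>
      ∃ x ∈ p, ∃ s ∈ D t', 1 ≤ s ∧ u s = x).max' hne)
    (hsp : ∃ t'', tp ≤ t'' ∧ t'' ≤ t ∧ (G t'').IsSP p) :
    tp ∈ priorTimes t ∧
      ((G tp).induce ((G tp).verts \ (Finset.Icc (tp + 1) t).image u)).IsSP p :=
  stmt12_general t u G hcoin p hne tp htp hsp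

end Apasp
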